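/- (Stability of the scheme for the pure degenerate equation, uniformly in h and ε.) Let d ≥ 1, 0 < λ ≤ Λ, θ ≥ 1, R > 0 and K_f, K_g ≥ 0. Then there exist h₀ > 0 depending only on λ and a constant C > 0 depending only on d, λ, θ, R, K_f and K_g such that the following holds. For every ε ∈ (0,1), every h ∈ (0, h₀), every grid Ω̄_h = Ω_h ∪ ∂Ω_h contained in the closed ball of radius R centred at the origin, every Isaacs data with ellipticity constants (λ,Λ), every f : Ω_h → ℝ with 0 ≤ f ≤ K_f, every g : ∂Ω_h → ℝ with |g| ≤ K_g, and every grid function u : Ω̄_h → ℝ satisfying G_h(u, x) = 0 for every x ∈ Ω̄_h, one has max_{x ∈ Ω̄_h} |u(x)| ≤ C. -/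

import Mathlib

open scoped BigOperators
open MeasureTheory
open scoped Classical

noncomputable section

namespace Paper

/-- `ℝᵈ` with the Euclidean structure. -/
abbrev E (d : ℕ) := EuclideanSpace ℝ (Fin d)

/-- The standard basis vector `eᵢ` of `ℝᵈ`. -/
def e (d : ℕ) (i : Fin d) : E d := EuclideanSpace.single i 1

/-- For a symmetric matrix, the maximum of the absolute values of its eigenvalues. -/
def specNorm {d : ℕ} (M : Matrix (Fin d) (Fin d) ℝ) : ℝ :=
  if h : M.IsHermitian then ⨆ i, |h.eigenvalues i| else 0

/-- `(λ,Λ)`-uniform ellipticity of `F : S(d) → ℝ`. -/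
def UniformlyElliptic (d : ℕ) (lam Lam : ℝ) (F : Matrix (Fin d) (Fin d) ℝ → ℝ) : Prop :=
  ∀ M N : Matrix (Fin d) (Fin d) ℝ, M.IsHermitian → N.PosSemidef →
    lam * specNorm N ≤ F M - F (M + N) ∧ F M - F (M + N) ≤ Lam * specNorm N

/-- The upwind discretisation `|D_h u (x)|²`. -/
def upwindSq (d : ℕ) (h : ℝ) (u : E d → ℝ) (x : E d) : ℝ :=
  (1 / h ^ 2) * ∑ i : Fin d,
    max (max (u x - u (x + h • e d i)) (u x - u (x - h • e d i))) 0 ^ 2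

/-- The monotone discretisation `L_h^A u (x)` of `Tr (A D²u)`. -/
def Lh (d : ℕ) (h : ℝ) (A : Matrix (Fin d) (Fin d) ℝ) (u : E d → ℝ) (x : E d) : ℝ :=
  (∑ i : Fin d, (A i i - ∑ j ∈ Finset.univ.erase i, |A i j|) *
      ((u (x + h • e d i) + u (x - h • e d i) - 2 * u x) / h ^ 2)) +
  ∑ i : Fin d, ∑ j ∈ Finset.univ.filter (fun j => i < j),
    (max (A i j) 0 *
        ((u (x + h • (e d i + e d j)) + u (x - h • (e d i + e d j)) - 2 * u x) / h ^ 2) +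
      max (-A i j) 0 *
        ((u (x + h • (e d i - e d j)) + u (x - h • (e d i - e d j)) - 2 * u x) / h ^ 2))

/-- Diagonal dominance of a matrix. -/
def DiagDominant {d : ℕ} (A : Matrix (Fin d) (Fin d) ℝ) : Prop :=
  ∀ i, ∑ j ∈ Finset.univ.erase i, |A i j| ≤ A i i

/-- Isaacs data with ellipticity constants `(λ, Λ)`: symmetric, diagonally dominant matrices
with `λ I ≤ A_{α,β} ≤ Λ I`. -/
def IsaacsData (d : ℕ) {ιA ιB : Type*} (lam Lam : ℝ)
    (A : ιA → ιB → Matrix (Fin d) (Fin d) ℝ) : Prop :=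
  ∀ a b, (A a b).IsHermitian ∧ DiagDominant (A a b) ∧
    (A a b - lam • (1 : Matrix (Fin d) (Fin d) ℝ)).PosSemidef ∧
    (Lam • (1 : Matrix (Fin d) (Fin d) ℝ) - A a b).PosSemidef

/-- Discretised Isaacs operator. -/
def Fh (d : ℕ) {ιA ιB : Type*} (h : ℝ) (A : ιA → ιB → Matrix (Fin d) (Fin d) ℝ)
    (u : E d → ℝ) (x : E d) : ℝ :=
  ⨆ a : ιA, ⨅ b : ιB, -(Lh d h (A a b) u x)

/-- A finite grid `Ω̄_h = Ω_h ∪ ∂Ω_h` whose interior points have all stencil points in the grid. -/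
structure Grid (d : ℕ) (h : ℝ) where
  interior : Finset (E d)
  boundary : Finset (E d)
  disj : Disjoint interior boundary
  nonempty : (interior ∪ boundary).Nonempty
  stencil_ax : ∀ x ∈ interior, ∀ i : Fin d,
    x + h • e d i ∈ interior ∪ boundary ∧ x - h • e d i ∈ interior ∪ boundary
  stencil_diag : ∀ x ∈ interior, ∀ i j : Fin d, i < j →
    x + h • (e d i + e d j) ∈ interior ∪ boundary ∧
    x - h • (e d i + e d j) ∈ interior ∪ boundary ∧
    x + h • (e d i - e d j) ∈ interior ∪ boundary ∧
    x - h • (e d i - e d j) ∈ interior ∪ boundary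

/-- The finite difference scheme `G_h` for the regularised pure degenerate equation. -/
def scheme (d : ℕ) {ιA ιB : Type*} {h : ℝ} (ε θ : ℝ)
    (A : ιA → ιB → Matrix (Fin d) (Fin d) ℝ) (G : Grid d h)
    (f g : E d → ℝ) (u : E d → ℝ) (x : E d) : ℝ :=
  if x ∈ G.interior then
    ε * u x + Fh d h A u x - f x / (ε + upwindSq d h u x) ^ (θ / 2)
  else u x - g x

/-- The finite difference scheme `G_h` for the regularised free transmission problem. -/
def schemeT (d : ℕ) {ιA ιB : Type*} {h : ℝ} (ε : ℝ) (θe : ℝ → ℝ)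
    (A : ιA → ιB → Matrix (Fin d) (Fin d) ℝ) (G : Grid d h)
    (f g : E d → ℝ) (u : E d → ℝ) (x : E d) : ℝ :=
  if x ∈ G.interior then
    ε * u x + Fh d h A u x - f x / (ε + upwindSq d h u x) ^ (θe (u x) / 2)
  else u x - g x

/-- The properties of the regularised degeneracy exponent `θ_ε` used in the transmission scheme. -/
def ThetaInterp (ε θ₁ θ₂ : ℝ) (θe : ℝ → ℝ) : Prop :=
  Monotone θe ∧ (∀ t, θ₁ ≤ θe t ∧ θe t ≤ θ₂) ∧
    (∀ t, t ≤ -ε → θe t = θ₁) ∧ (∀ t, ε ≤ t → θe t = θ₂)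

/-- The Hessian matrix of `φ : ℝᵈ → ℝ` at `x`. -/
def hessianMatrix (d : ℕ) (φ : E d → ℝ) (x : E d) : Matrix (Fin d) (Fin d) ℝ :=
  Matrix.of fun i j => fderiv ℝ (fun y => fderiv ℝ φ y (e d j)) x (e d i)

/-- The piecewise-linear interpolation `Θ_ε` between the degeneracy rates `θ₁` and `θ₂`. -/
def ThetaStep (θ₁ θ₂ ε t : ℝ) : ℝ :=
  if t ≤ -ε then θ₁
  else if t < ε then (θ₂ - θ₁) / (2 * ε) * t + (θ₁ + θ₂) / 2
  else θ₂

/-!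
The lower bound is the discrete minimum principle: at a minimum point of `u` in `Ω_h` all
second differences are nonnegative, so `F_h u ≤ 0` and the equation forces `u ≥ 0` there.

For the upper bound, compare `u` with the barrier `ψ y = M - B exp (y₀)`. Since
`(eʰ + e⁻ʰ - 2) / h² ≥ 1` for every `h ≠ 0`, the monotone discretisation gives
`-L_h^A ψ ≥ λ B e⁻ᴿ`, and `ψ` drops by at least `B e⁻ᴿ h` along `e₀`; the choice
`B = eᴿ (1 + K_f / λ)` makes these `≥ K_f` and `≥ h`. At a maximum point of `u - ψ` in `Ω_h`
monotonicity transfers both facts to `u`: `F_h u ≥ K_f`, and the upwind gradient is at least `1`,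
so the degenerate term `f / (ε + |D_h u|²)^{θ/2}` is at most `K_f`, whence `ε u ≤ 0`. So `u - ψ`
is maximal on `∂Ω_h`, where `u = g ≤ K_g ≤ ψ`.
-/
section StencilOperators

variable {d : ℕ} {h : ℝ}

lemma Lh_le_Lh_of_forall_sub_le (G : Grid d h) {A : Matrix (Fin d) (Fin d) ℝ}
    (hA : DiagDominant A) {u v : E d → ℝ} {x : E d} (hx : x ∈ G.interior)
    (huv : ∀ y ∈ G.interior ∪ G.boundary, u y - u x ≤ v y - v x) :
    Lh d h A u x ≤ Lh d h A v x := by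
  have hdiff : ∀ w : E d, x + h • w ∈ G.interior ∪ G.boundary →
      x - h • w ∈ G.interior ∪ G.boundary →
      (u (x + h • w) + u (x - h • w) - 2 * u x) / h ^ 2 ≤
        (v (x + h • w) + v (x - h • w) - 2 * v x) / h ^ 2 := fun w hp hm =>
    div_le_div_of_nonneg_right (by linarith [huv _ hp, huv _ hm]) (sq_nonneg h)
  refine add_le_add (Finset.sum_le_sum fun i _ => ?_)
    (Finset.sum_le_sum fun i _ => Finset.sum_le_sum fun j hj => ?_)
  · exact mul_le_mul_of_nonneg_left
      (hdiff _ (G.stencil_ax x hx i).1 (G.stencil_ax x hx i).2) (sub_nonneg.mpr (hA i))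
  · obtain ⟨hpp, hpm, hmp, hmm⟩ := G.stencil_diag x hx i j (Finset.mem_filter.mp hj).2
    exact add_le_add (mul_le_mul_of_nonneg_left (hdiff _ hpp hpm) (le_max_right _ _))
      (mul_le_mul_of_nonneg_left (hdiff _ hmp hmm) (le_max_right _ _))

lemma Lh_const (A : Matrix (Fin d) (Fin d) ℝ) (c : ℝ) (x : E d) :
    Lh d h A (fun _ => c) x = 0 := by
  simp [Lh, show c + c - 2 * c = 0 by ring]

lemma exists_forall_neg_Lh_le (Lam : ℝ) (u : E d → ℝ) (x : E d) :
    ∃ M, ∀ A : Matrix (Fin d) (Fin d) ℝ, DiagDominant A → (∀ i, A i i ≤ Lam) →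
      -(Lh d h A u x) ≤ M := by
  let δ : E d → ℝ := fun w => (u (x + h • w) + u (x - h • w) - 2 * u x) / h ^ 2
  refine ⟨Lam * (∑ i, |δ (e d i)| + ∑ i, ∑ j ∈ Finset.univ.filter (fun j => i < j),
    (|δ (e d i + e d j)| + |δ (e d i - e d j)|)), fun A hA hLam => ?_⟩
  have hterm : ∀ m t : ℝ, 0 ≤ m → m ≤ Lam → -(m * t) ≤ Lam * |t| := fun m t hm hmL =>
    calc -(m * t) ≤ m * |t| := by
          rw [← mul_neg]; exact mul_le_mul_of_nonneg_left (neg_le_abs t) hm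
      _ ≤ Lam * |t| := mul_le_mul_of_nonneg_right hmL (abs_nonneg t)
  have hoff : ∀ i j, i ≠ j → |A i j| ≤ Lam := fun i j hij =>
    calc |A i j| ≤ ∑ k ∈ Finset.univ.erase i, |A i k| :=
          Finset.single_le_sum (f := fun k => |A i k|) (fun k _ => abs_nonneg _)
            (Finset.mem_erase.mpr ⟨hij.symm, Finset.mem_univ j⟩)
      _ ≤ A i i := hA i
      _ ≤ Lam := hLam i
  have hLam0 : ∀ i j, i ≠ j → 0 ≤ Lam := fun i j hij => (abs_nonneg _).trans (hoff i j hij)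
  change -(∑ i, (A i i - ∑ j ∈ Finset.univ.erase i, |A i j|) * δ (e d i) +
    ∑ i, ∑ j ∈ Finset.univ.filter (fun j => i < j),
      (max (A i j) 0 * δ (e d i + e d j) + max (-A i j) 0 * δ (e d i - e d j))) ≤ _
  simp only [neg_add, ← Finset.sum_neg_distrib, mul_add, Finset.mul_sum]
  gcongr with i _ i _ j hj
  · exact hterm _ _ (sub_nonneg.mpr (hA i))
      ((sub_le_self _ (Finset.sum_nonneg fun _ _ => abs_nonneg _)).trans (hLam i))
  · have hij := (Finset.mem_filter.mp hj).2.ne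
    exact hterm _ _ (le_max_right _ _)
      (max_le ((le_abs_self _).trans (hoff i j hij)) (hLam0 i j hij))
  · have hij := (Finset.mem_filter.mp hj).2.ne
    exact hterm _ _ (le_max_right _ _)
      (max_le ((neg_le_abs _).trans (hoff i j hij)) (hLam0 i j hij))

lemma upwindSq_nonneg (u : E d → ℝ) (x : E d) : 0 ≤ upwindSq d h u x := by
  unfold upwindSq
  positivity

lemma one_le_upwindSq {u : E d → ℝ} {x : E d} (hh : 0 < h) (i : Fin d)
    (hi : h ≤ u x - u (x + h • e d i)) : 1 ≤ upwindSq d h u x := by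
  have hterm : h ^ 2 ≤ max (max (u x - u (x + h • e d i)) (u x - u (x - h • e d i))) 0 ^ 2 := by
    gcongr
    exact hi.trans ((le_max_left _ _).trans (le_max_left _ _))
  calc (1 : ℝ) = 1 / h ^ 2 * h ^ 2 := by field_simp
    _ ≤ upwindSq d h u x := by
      unfold upwindSq
      gcongr
      exact hterm.trans (Finset.single_le_sum (f := fun j =>
        max (max (u x - u (x + h • e d j)) (u x - u (x - h • e d j))) 0 ^ 2)
        (fun j _ => sq_nonneg _) (Finset.mem_univ i))

lemma Lh_comp_apply_zero (A : Matrix (Fin (d + 1)) (Fin (d + 1)) ℝ) (φ : ℝ → ℝ)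
    (x : E (d + 1)) :
    Lh (d + 1) h A (fun y => φ (y 0)) x =
      A 0 0 * ((φ (x 0 + h) + φ (x 0 - h) - 2 * φ (x 0)) / h ^ 2) := by
  have hzero : φ (x 0) + φ (x 0) - 2 * φ (x 0) = 0 := by ring
  simp only [Lh, e, Finset.sum_filter, Fin.sum_univ_succ]
  simp [Fin.succ_pos, (Fin.succ_ne_zero _).symm, hzero]
  simp only [← add_mul, max_zero_add_max_neg_zero_eq_abs_self, ← Finset.sum_mul,
    Fin.sum_univ_succ]
  ring

end StencilOperators

lemma sq_le_exp_add_exp_neg_sub_two (t : ℝ) : t ^ 2 ≤ Real.exp t + Real.exp (-t) - 2 := by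
  have hsinh : |t / 2| ≤ |Real.sinh (t / 2)| := by
    rw [Real.abs_sinh]
    exact Real.self_le_sinh_iff.mpr (abs_nonneg _)
  have hsq : (t / 2) ^ 2 ≤ Real.sinh (t / 2) ^ 2 := sq_le_sq.mpr hsinh
  have hexp : Real.exp t = Real.exp (t / 2) ^ 2 := by rw [← Real.exp_nat_mul]; ring_nf
  have hexp' : Real.exp (-t) = Real.exp (-(t / 2)) ^ 2 := by rw [← Real.exp_nat_mul]; ring_nf
  have hmul : Real.exp (t / 2) * Real.exp (-(t / 2)) = 1 := by rw [← Real.exp_add]; simp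
  rw [Real.sinh_eq] at hsq
  nlinarith

section ExpBarrier

variable {d : ℕ} {h : ℝ}

lemma le_neg_Lh_sub_mul_exp (hh : h ≠ 0) {A : Matrix (Fin (d + 1)) (Fin (d + 1)) ℝ}
    (hA : 0 ≤ A 0 0) {B : ℝ} (hB : 0 ≤ B) (M : ℝ) (x : E (d + 1)) :
    A 0 0 * (B * Real.exp (x 0)) ≤
      -(Lh (d + 1) h A (fun y => M - B * Real.exp (y 0)) x) := by
  have hsecond : (M - B * Real.exp (x 0 + h)) + (M - B * Real.exp (x 0 - h)) -
      2 * (M - B * Real.exp (x 0)) =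
        -(B * Real.exp (x 0) * (Real.exp h + Real.exp (-h) - 2)) := by
    rw [sub_eq_add_neg (x 0), Real.exp_add, Real.exp_add]
    ring
  have hq : 1 ≤ (Real.exp h + Real.exp (-h) - 2) / h ^ 2 :=
    (one_le_div (by positivity)).mpr (sq_le_exp_add_exp_neg_sub_two h)
  rw [Lh_comp_apply_zero (φ := fun t => M - B * Real.exp t), hsecond, neg_div, mul_neg, neg_neg,
    mul_div_assoc]
  exact mul_le_mul_of_nonneg_left (le_mul_of_one_le_right (by positivity) hq) hA

lemma mul_exp_mul_le_sub_mul_exp {B : ℝ} (hB : 0 ≤ B) (M : ℝ)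
    (x : E (d + 1)) :
    B * Real.exp (x 0) * h ≤
      (M - B * Real.exp (x 0)) - (M - B * Real.exp ((x + h • e (d + 1) 0) 0)) := by
  have hcoord : (x + h • e (d + 1) 0) 0 = x 0 + h := by simp [e]
  have hexp : h ≤ Real.exp h - 1 := by linarith [Real.add_one_le_exp h]
  rw [hcoord, Real.exp_add]
  nlinarith [mul_le_mul_of_nonneg_left hexp (by positivity : 0 ≤ B * Real.exp (x 0))]

end ExpBarrier

lemma le_ciSup_ciInf {ι κ : Type*} [Nonempty ι] [Nonempty κ] {v : ι → κ → ℝ} {c U : ℝ}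
    (hc : ∀ a b, c ≤ v a b) (hU : ∀ a b, v a b ≤ U) : c ≤ ⨆ a, ⨅ b, v a b := by
  have hbdd : ∀ a, BddBelow (Set.range (v a)) := fun a => ⟨c, Set.forall_mem_range.2 (hc a)⟩
  have hsup : BddAbove (Set.range fun a => ⨅ b, v a b) :=
    ⟨U, Set.forall_mem_range.2 fun a =>
      (ciInf_le (hbdd a) (Classical.arbitrary κ)).trans (hU a _)⟩
  exact le_ciSup_of_le hsup (Classical.arbitrary ι) (le_ciInf (hc _))

section IsaacsOperator

variable {d : ℕ} {h : ℝ} {ιA ιB : Type*} {A : ιA → ιB → Matrix (Fin d) (Fin d) ℝ}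

lemma Fh_nonpos {u : E d → ℝ} {x : E d} (hLh : ∀ a b, 0 ≤ Lh d h (A a b) u x) :
    Fh d h A u x ≤ 0 :=
  Real.iSup_nonpos fun a => Real.iInf_nonpos fun b => neg_nonpos.mpr (hLh a b)

-- Without the upper bound, `⨆` of an unbounded family of reals would take the junk value `0`.
lemma le_Fh [Nonempty ιA] [Nonempty ιB] {Lam c : ℝ}
    (hA : ∀ a b, DiagDominant (A a b) ∧ ∀ i, A a b i i ≤ Lam) {u : E d → ℝ} {x : E d}
    (hc : ∀ a b, c ≤ -(Lh d h (A a b) u x)) : c ≤ Fh d h A u x := by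
  obtain ⟨M, hM⟩ := exists_forall_neg_Lh_le (h := h) Lam u x
  exact le_ciSup_ciInf hc fun a b => hM _ (hA a b).1 (hA a b).2

lemma IsaacsData.le_diag {lam Lam : ℝ} (hA : IsaacsData d lam Lam A) (a : ιA) (b : ιB)
    (i : Fin d) : lam ≤ A a b i i := by
  simpa using (hA a b).2.2.1.diag_nonneg (i := i)

lemma IsaacsData.diag_le {lam Lam : ℝ} (hA : IsaacsData d lam Lam A) (a : ιA) (b : ιB)
    (i : Fin d) : A a b i i ≤ Lam := by
  simpa using (hA a b).2.2.2.diag_nonneg (i := i)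

end IsaacsOperator

section Scheme

variable {d : ℕ} {h ε θ : ℝ} {ιA ιB : Type*} {A : ιA → ιB → Matrix (Fin d) (Fin d) ℝ}
  {G : Grid d h} {f g u : E d → ℝ}

theorem neg_le_of_scheme_eq_zero {K : ℝ} (hε : 0 < ε) (hK : 0 ≤ K)
    (hA : ∀ a b, DiagDominant (A a b)) (hf : ∀ x ∈ G.interior, 0 ≤ f x)
    (hg : ∀ x ∈ G.boundary, -K ≤ g x)
    (hu : ∀ x ∈ G.interior ∪ G.boundary, scheme d ε θ A G f g u x = 0) :
    ∀ x ∈ G.interior ∪ G.boundary, -K ≤ u x := by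
  obtain ⟨x₀, hx₀, hmin⟩ := Finset.exists_min_image _ u G.nonempty
  suffices -K ≤ u x₀ from fun x hx => this.trans (hmin x hx)
  have hsch := hu x₀ hx₀
  by_cases hint : x₀ ∈ G.interior
  · rw [scheme, if_pos hint] at hsch
    have hF : Fh d h A u x₀ ≤ 0 := Fh_nonpos fun a b => by
      simpa [Lh_const] using Lh_le_Lh_of_forall_sub_le G (hA a b) (u := fun _ => u x₀) hint
        fun y hy => by simpa using hmin y hy
    have hq : 0 ≤ f x₀ / (ε + upwindSq d h u x₀) ^ (θ / 2) :=
      div_nonneg (hf x₀ hint)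
        (Real.rpow_nonneg (add_nonneg hε.le (upwindSq_nonneg u x₀)) _)
    have hu₀ : 0 ≤ u x₀ := (mul_nonneg_iff_of_pos_left hε).mp (by linarith)
    linarith
  · have hbdy : x₀ ∈ G.boundary := (Finset.mem_union.mp hx₀).resolve_left hint
    rw [scheme, if_neg hint] at hsch
    linarith [hg x₀ hbdy]

theorem le_of_scheme_eq_zero_of_barrier [Nonempty ιA] [Nonempty ιB] {Lam Kf : ℝ}
    {ψ : E d → ℝ} (hh : 0 < h) (hε : 0 < ε) (hθ : 0 ≤ θ)
    (hA : ∀ a b, DiagDominant (A a b) ∧ ∀ i, A a b i i ≤ Lam)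
    (hf : ∀ x ∈ G.interior, 0 ≤ f x ∧ f x ≤ Kf)
    (hψL : ∀ x ∈ G.interior, ∀ a b, Kf ≤ -(Lh d h (A a b) ψ x))
    (hψD : ∀ x ∈ G.interior, ∃ i, h ≤ ψ x - ψ (x + h • e d i))
    (hψ₀ : ∀ x ∈ G.interior, 0 ≤ ψ x) (hψg : ∀ x ∈ G.boundary, g x ≤ ψ x)
    (hu : ∀ x ∈ G.interior ∪ G.boundary, scheme d ε θ A G f g u x = 0) :
    ∀ x ∈ G.interior ∪ G.boundary, u x ≤ ψ x := by
  obtain ⟨x₀, hx₀, hmax⟩ := Finset.exists_max_image _ (fun y => u y - ψ y) G.nonempty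
  suffices u x₀ ≤ ψ x₀ from fun x hx => by linarith [hmax x hx]
  have hcomp : ∀ y ∈ G.interior ∪ G.boundary, u y - u x₀ ≤ ψ y - ψ x₀ := fun y hy => by
    linarith [hmax y hy]
  have hsch := hu x₀ hx₀
  by_cases hint : x₀ ∈ G.interior
  · rw [scheme, if_pos hint] at hsch
    have hF : Kf ≤ Fh d h A u x₀ := le_Fh hA fun a b =>
      (hψL x₀ hint a b).trans (neg_le_neg (Lh_le_Lh_of_forall_sub_le G (hA a b).1 hint hcomp))
    have hgrad : 1 ≤ upwindSq d h u x₀ := by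
      obtain ⟨i, hi⟩ := hψD x₀ hint
      have := hcomp _ (G.stencil_ax x₀ hint i).1
      exact one_le_upwindSq hh i (by linarith)
    have hq : f x₀ / (ε + upwindSq d h u x₀) ^ (θ / 2) ≤ Kf :=
      (div_le_self (hf x₀ hint).1 (Real.one_le_rpow (by linarith) (by linarith))).trans
        (hf x₀ hint).2
    have hu₀ : u x₀ ≤ 0 := nonpos_of_mul_nonpos_right (by linarith) hε
    exact hu₀.trans (hψ₀ x₀ hint)
  · have hbdy : x₀ ∈ G.boundary := (Finset.mem_union.mp hx₀).resolve_left hint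
    rw [scheme, if_neg hint] at hsch
    linarith [hψg x₀ hbdy]

end Scheme

theorem le_of_scheme_eq_zero_of_norm_le {d : ℕ} {h ε θ lam Lam R Kf Kg : ℝ} {ιA ιB : Type*}
    [Nonempty ιA] [Nonempty ιB] {A : ιA → ιB → Matrix (Fin (d + 1)) (Fin (d + 1)) ℝ}
    {G : Grid (d + 1) h} {f g u : E (d + 1) → ℝ} (hh : 0 < h) (hε : 0 < ε) (hθ : 0 ≤ θ)
    (hlam : 0 < lam) (hKf : 0 ≤ Kf) (hKg : 0 ≤ Kg) (hA : IsaacsData (d + 1) lam Lam A)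
    (hR : ∀ x ∈ G.interior ∪ G.boundary, ‖x‖ ≤ R)
    (hf : ∀ x ∈ G.interior, 0 ≤ f x ∧ f x ≤ Kf) (hg : ∀ x ∈ G.boundary, g x ≤ Kg)
    (hu : ∀ x ∈ G.interior ∪ G.boundary, scheme (d + 1) ε θ A G f g u x = 0) :
    ∀ x ∈ G.interior ∪ G.boundary,
      u x ≤ Kg + Real.exp R * (1 + Kf / lam) * Real.exp R := by
  set B := Real.exp R * (1 + Kf / lam)
  have hB : 0 ≤ B := by positivity
  have hcoord : ∀ y ∈ G.interior ∪ G.boundary, |y 0| ≤ R := fun y hy =>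
    (PiLp.norm_apply_le y 0).trans (hR y hy)
  have hBy : ∀ y ∈ G.interior ∪ G.boundary, 1 + Kf / lam ≤ B * Real.exp (y 0) := by
    intro y hy
    calc 1 + Kf / lam = B * Real.exp (-R) := by
          rw [Real.exp_neg, mul_right_comm, mul_inv_cancel₀ (Real.exp_pos R).ne', one_mul]
      _ ≤ B * Real.exp (y 0) := by gcongr; linarith [(abs_le.mp (hcoord y hy)).1]
  have hψ : ∀ y ∈ G.interior ∪ G.boundary, Kg ≤ Kg + B * Real.exp R - B * Real.exp (y 0) := by
    intro y hy
    have : Real.exp (y 0) ≤ Real.exp R := Real.exp_le_exp.mpr (abs_le.mp (hcoord y hy)).2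
    nlinarith
  have hKf_lam : 1 ≤ 1 + Kf / lam := le_add_of_nonneg_right (by positivity)
  refine fun x hx => (le_of_scheme_eq_zero_of_barrier hh hε hθ
    (fun a b => ⟨(hA a b).2.1, hA.diag_le a b⟩) hf (fun y hy a b => ?_) (fun y hy => ⟨0, ?_⟩)
    (fun y hy => hKg.trans (hψ y (Finset.mem_union_left _ hy)))
    (fun y hy => (hg y hy).trans (hψ y (Finset.mem_union_right _ hy))) hu x hx).trans
    (sub_le_self _ (by positivity))
  · have hy' := Finset.mem_union_left G.boundary hy
    calc Kf ≤ lam * (1 + Kf / lam) := by rw [mul_add, mul_div_cancel₀ _ hlam.ne']; linarith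
      _ ≤ A a b 0 0 * (B * Real.exp (y 0)) :=
          mul_le_mul (hA.le_diag a b 0) (hBy y hy') (by linarith)
            (hlam.le.trans (hA.le_diag a b 0))
      _ ≤ _ := le_neg_Lh_sub_mul_exp hh.ne' (hlam.le.trans (hA.le_diag a b 0)) hB _ y
  · have hy' := Finset.mem_union_left G.boundary hy
    calc h ≤ B * Real.exp (y 0) * h := le_mul_of_one_le_left hh.le (hKf_lam.trans (hBy y hy'))
      _ ≤ _ := mul_exp_mul_le_sub_mul_exp hB _ y

/-- Stability of the scheme for the pure degenerate equation,
uniformly in `h` and `ε`: solutions of `G_h(u, ·) = 0` are bounded by a constant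
depending only on `d, λ, θ, R, K_f, K_g` (with `h₀` depending only on `λ`). -/
theorem scheme_stability (lam : ℝ) (hlam : 0 < lam) :
    ∃ h₀ : ℝ, 0 < h₀ ∧
    ∀ (d : ℕ), 1 ≤ d →
    ∀ (θ R Kf Kg : ℝ), 1 ≤ θ → 0 < R → 0 ≤ Kf → 0 ≤ Kg →
    ∃ C : ℝ, 0 < C ∧
    ∀ (Lam : ℝ), lam ≤ Lam →
    ∀ (ε : ℝ), 0 < ε → ε < 1 →
    ∀ (h : ℝ), 0 < h → h < h₀ →
    ∀ (G : Grid d h), (∀ x ∈ G.interior ∪ G.boundary, ‖x‖ ≤ R) →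
    ∀ (ιA ιB : Type) (_ : Nonempty ιA) (_ : Nonempty ιB)
      (A : ιA → ιB → Matrix (Fin d) (Fin d) ℝ), IsaacsData d lam Lam A →
    ∀ (f : E d → ℝ), (∀ x ∈ G.interior, 0 ≤ f x ∧ f x ≤ Kf) →
    ∀ (g : E d → ℝ), (∀ x ∈ G.boundary, |g x| ≤ Kg) →
    ∀ (u : E d → ℝ), (∀ x ∈ G.interior ∪ G.boundary, scheme d ε θ A G f g u x = 0) →
    ∀ x ∈ G.interior ∪ G.boundary, |u x| ≤ C := by
  refine ⟨1, one_pos, fun d hd θ R Kf Kg hθ _ hKf hKg => ?_⟩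
  obtain ⟨d, rfl⟩ : ∃ n, d = n + 1 := ⟨d - 1, by omega⟩
  have hbarrier : 0 < Real.exp R * (1 + Kf / lam) * Real.exp R := by positivity
  refine ⟨Kg + Real.exp R * (1 + Kf / lam) * Real.exp R, by positivity, ?_⟩
  intro Lam _ ε hε _ h hh _ G hR ιA ιB _ _ A hA f hf g hg u hu x hx
  have hlower := neg_le_of_scheme_eq_zero hε hKg (fun a b => (hA a b).2.1)
    (fun y hy => (hf y hy).1) (fun y hy => (abs_le.mp (hg y hy)).1) hu x hx
  have hupper := le_of_scheme_eq_zero_of_norm_le hh hε (by linarith) hlam hKf hKg hA hR hf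
    (fun y hy => (abs_le.mp (hg y hy)).2) hu x hx
  exact abs_le.mpr ⟨by linarith, hupper⟩

end Paper
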